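/- Let R be a commutative ring equipped with an involutive ring automorphism r ↦ r̄, let n, k ≥ 1, let x_1, x_2, x_3 ∈ R, and let a_0,…,a_{k−1} ∈ R^n with a_i = (a_{i:0},…,a_{i:n−1}). Set A_i = circ(a_i) (the 1-circulant matrix generated by a_i), let Y = circ(A_0,…,A_{k−1}) be the kn×kn block 1-circulant matrix with these blocks, let X_2 be the 1×kn row vector all of whose entries equal x_2, let X_3 be the 1×kn row vector all of whose entries equal x_3, and let X be the (kn+1)×(kn+1) block matrix X = [[x_1, X_2], [X_3^T, Y]]. Then X·(X̄)^T = −I_{kn+1} if and only if all of the following hold: (i) 1 + x_1·x̄_1 + (kn)·x_2·x̄_2 = 0 (where (kn)·r denotes the kn-fold sum of r); (ii) x_1·x̄_3 + x_2·Σ_{i=0}^{k−1} Σ_{s=0}^{n−1} ā_{i:s} = 0; (iii) Σ_{i=0}^{k−1} Θ(a_i, ā_i, 0) = −1 − x_3·x̄_3 and Σ_{i=0}^{k−1} Θ(a_i, ā_i, t) = −x_3·x̄_3 for every t ∈ {1,…,⌊n/2⌋}; (iv) Σ_{i=0}^{k−1} Θ(a_{[i+j]_k}, ā_i, 0) = −x_3·x̄_3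 for every j ∈ {1,…,⌊k/2⌋}; (v) Σ_{i=0}^{k−1} Θ(a_{[i+j]_k}, ā_i, t) = −x_3·x̄_3 for every j ∈ {1,…,k−1} and every t ∈ {1,…,⌊n/2⌋}. -/

import Mathlib

open Matrix

def Theta {R : Type*} [CommRing R] (n : ℕ) (x y : ℕ → R) (j : ℕ) (l : R) : R :=
  (∑ i ∈ Finset.range (n - j), x ((i + j) % n) * y i)
    + l * ∑ i ∈ Finset.Ico (n - j) n, x ((i + j) % n) * y i

def circ {R : Type*} [CommRing R] (n : ℕ) (l : R) (a : ℕ → R) : Matrix (Fin n) (Fin n) R :=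
  Matrix.of fun i j => if (i : ℕ) ≤ (j : ℕ) then a ((j : ℕ) - i) else l * a (n + j - i)

def blockCirc {R : Type*} [CommRing R] (k n : ℕ) (l : R) (A : ℕ → Matrix (Fin n) (Fin n) R) :
    Matrix (Fin k × Fin n) (Fin k × Fin n) R :=
  Matrix.of fun p q =>
    if (p.1 : ℕ) ≤ (q.1 : ℕ) then A ((q.1 : ℕ) - p.1) p.2 q.2
    else l * A (k + q.1 - p.1) p.2 q.2

namespace Stmt12Aux

variable {R : Type*} [CommRing R]

lemma theta_eq (n : ℕ) (x y : ℕ → R) (t : ℕ) :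
    Theta n x y t 1 = ∑ i ∈ Finset.range n, x ((i + t) % n) * y i := by
  unfold Theta
  rw [one_mul, Finset.range_eq_Ico, Finset.range_eq_Ico]
  exact Finset.sum_Ico_consecutive (fun i => x ((i + t) % n) * y i) (Nat.zero_le _) (Nat.sub_le n t)

lemma subval {k : ℕ} (p q : Fin k) :
    ((q - p : Fin k) : ℕ) = if (p : ℕ) ≤ (q : ℕ) then (q : ℕ) - p else k + q - p := by
  have hp := p.is_lt
  have hq := q.is_lt
  rw [Fin.sub_def]
  show (k - (p : ℕ) + q) % k = _
  split_ifs with h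
  · have e : k - (p : ℕ) + q = k + ((q : ℕ) - p) := by omega
    rw [e, Nat.add_mod_left, Nat.mod_eq_of_lt (by omega)]
  · have e : k - (p : ℕ) + q = k + q - p := by omega
    rw [e, Nat.mod_eq_of_lt (by omega)]

lemma neg_val {k : ℕ} [NeZero k] (j : Fin k) (h : j ≠ 0) : ((-j : Fin k) : ℕ) = k - j := by
  have : (-j : Fin k) = 0 - j := by rw [zero_sub]
  rw [this, subval]
  have h0 : ((0 : Fin k) : ℕ) = 0 := rfl
  rw [h0]
  have : (j : ℕ) ≠ 0 := fun hc => h (Fin.ext (by simp [hc]))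
  have := j.is_lt
  split_ifs with h' <;> omega

lemma blockCirc_apply {k n : ℕ} (a : ℕ → ℕ → R) (p q : Fin k × Fin n) :
    blockCirc k n 1 (fun i => circ n 1 (a i)) p q
      = a ((q.1 - p.1 : Fin k) : ℕ) ((q.2 - p.2 : Fin n) : ℕ) := by
  unfold blockCirc circ
  simp only [Matrix.of_apply, one_mul, subval]
  split_ifs <;> rfl

lemma blockCirc_rowsum {k n : ℕ} [NeZero k] [NeZero n] (a : ℕ → ℕ → R) (q : Fin k × Fin n) :
    ∑ p : Fin k × Fin n, blockCirc k n 1 (fun i => circ n 1 (a i)) q p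
      = ∑ i ∈ Finset.range k, ∑ s ∈ Finset.range n, a i s := by
  simp only [blockCirc_apply]
  refine Eq.trans (Fintype.sum_equiv ((Equiv.subRight q.1).prodCongr (Equiv.subRight q.2))
      _ (fun p : Fin k × Fin n => a (p.1 : ℕ) (p.2 : ℕ)) fun x => rfl) ?_
  rw [Fintype.sum_prod_type,
    ← Fin.sum_univ_eq_sum_range (fun i => ∑ s ∈ Finset.range n, a i s) k]
  exact Finset.sum_congr rfl fun i _ =>
    (Fin.sum_univ_eq_sum_range (fun s => a (i : ℕ) s) n)

def TF (σ : R ≃+* R) (k n : ℕ) (a : ℕ → ℕ → R) (j : Fin k) (t : Fin n) : R :=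
  ∑ p : Fin k × Fin n,
    a ((p.1 + j : Fin k) : ℕ) ((p.2 + t : Fin n) : ℕ) * σ (a (p.1 : ℕ) (p.2 : ℕ))

lemma sum_theta_eq (σ : R ≃+* R) (k n : ℕ) (a : ℕ → ℕ → R) (j : Fin k) (t : Fin n) :
    ∑ i ∈ Finset.range k, Theta n (a ((i + (j : ℕ)) % k)) (fun s => σ (a i s)) (t : ℕ) 1
      = TF σ k n a j t := by
  unfold TF
  simp only [theta_eq]
  rw [Fintype.sum_prod_type,
    ← Fin.sum_univ_eq_sum_range
      (fun i => ∑ v ∈ Finset.range n, a ((i + (j:ℕ)) % k) ((v + (t:ℕ)) % n) * σ (a i v)) k]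
  refine Finset.sum_congr rfl fun i _ => ?_
  rw [← Fin.sum_univ_eq_sum_range
      (fun v => a (((i:ℕ) + (j:ℕ)) % k) ((v + (t:ℕ)) % n) * σ (a (i:ℕ) v)) n]
  exact Finset.sum_congr rfl fun v _ => by rw [Fin.val_add, Fin.val_add]

lemma TF_symm (σ : R ≃+* R) (hσ : Function.Involutive σ) (k n : ℕ) [NeZero k] [NeZero n]
    (a : ℕ → ℕ → R) (j : Fin k) (t : Fin n) :
    σ (TF σ k n a (-j) (-t)) = TF σ k n a j t := by
  unfold TF
  rw [map_sum,
    ← Equiv.sum_comp ((Equiv.addRight j).prodCongr (Equiv.addRight t))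
      (fun p : Fin k × Fin n =>
        σ (a ((p.1 + -j : Fin k) : ℕ) ((p.2 + -t : Fin n) : ℕ) * σ (a (p.1 : ℕ) (p.2 : ℕ))))]
  refine Finset.sum_congr rfl fun p _ => ?_
  simp only [Equiv.prodCongr_apply, Equiv.coe_addRight, Prod.map, add_neg_cancel_right]
  rw [_root_.map_mul, hσ]
  ring

end Stmt12Aux

open Stmt12Aux

theorem stmt12 {R : Type*} [CommRing R] (σ : R ≃+* R) (hσ : Function.Involutive σ)
    (n k : ℕ) (hn : 1 ≤ n) (hk : 1 ≤ k) (x₁ x₂ x₃ : R) (a : ℕ → ℕ → R)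
    (Y : Matrix (Fin k × Fin n) (Fin k × Fin n) R)
    (hY : Y = blockCirc k n 1 (fun i => circ n 1 (a i)))
    (X : Matrix (Unit ⊕ Fin k × Fin n) (Unit ⊕ Fin k × Fin n) R)
    (hX : X = Matrix.fromBlocks (Matrix.of fun _ _ => x₁) (Matrix.of fun _ _ => x₂)
        (Matrix.of fun _ _ => x₃) Y) :
    X * (X.map σ)ᵀ = -1
      ↔ (1 + x₁ * σ x₁ + (k * n) • (x₂ * σ x₂) = 0
          ∧ x₁ * σ x₃ + x₂ * ∑ i ∈ Finset.range k, ∑ s ∈ Finset.range n, σ (a i s) = 0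
          ∧ (∑ i ∈ Finset.range k, Theta n (a i) (fun s => σ (a i s)) 0 1 = -1 - x₃ * σ x₃
              ∧ ∀ t, 1 ≤ t → t ≤ n / 2 →
                  ∑ i ∈ Finset.range k, Theta n (a i) (fun s => σ (a i s)) t 1 = -(x₃ * σ x₃))
          ∧ (∀ j, 1 ≤ j → j ≤ k / 2 →
              ∑ i ∈ Finset.range k,
                Theta n (a ((i + j) % k)) (fun s => σ (a i s)) 0 1 = -(x₃ * σ x₃))
          ∧ ∀ j, 1 ≤ j → j ≤ k - 1 → ∀ t, 1 ≤ t → t ≤ n / 2 →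
              ∑ i ∈ Finset.range k,
                Theta n (a ((i + j) % k)) (fun s => σ (a i s)) t 1 = -(x₃ * σ x₃)) := by
  have hkz : NeZero k := ⟨by omega⟩
  have hnz : NeZero n := ⟨by omega⟩
  subst hY hX
  set B := blockCirc k n 1 (fun i => circ n 1 (a i)) with hB
  set M := Matrix.fromBlocks (Matrix.of fun _ _ => x₁) (Matrix.of fun _ _ => x₂)
      (Matrix.of fun _ _ => x₃) B with hM
  set Sa : R := ∑ i ∈ Finset.range k, ∑ s ∈ Finset.range n, a i s with hSa
  have hSaσ : ∑ i ∈ Finset.range k, ∑ s ∈ Finset.range n, σ (a i s) = σ Sa := by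
    rw [hSa, map_sum]
    exact Finset.sum_congr rfl fun i _ => (map_sum σ _ _).symm
  have E11 : (M * (M.map σ)ᵀ) (Sum.inl ()) (Sum.inl ())
      = x₁ * σ x₁ + (k * n) • (x₂ * σ x₂) := by
    rw [Matrix.mul_apply, Fintype.sum_sum_type]
    simp [hM, Finset.sum_const, Fintype.card_prod, mul_comm]
  have E12 : ∀ q, (M * (M.map σ)ᵀ) (Sum.inl ()) (Sum.inr q) = x₁ * σ x₃ + x₂ * σ Sa := by
    intro q
    rw [Matrix.mul_apply, Fintype.sum_sum_type]
    have h2 : ∀ p : Fin k × Fin n,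
        M (Sum.inl ()) (Sum.inr p) * ((M.map σ)ᵀ) (Sum.inr p) (Sum.inr q)
          = x₂ * σ (B q p) := by
      intro p; simp [hM]
    simp only [h2]
    rw [← Finset.mul_sum, ← map_sum, hB, blockCirc_rowsum, ← hSa]
    simp [hM]
  have E21 : ∀ p, (M * (M.map σ)ᵀ) (Sum.inr p) (Sum.inl ()) = x₃ * σ x₁ + Sa * σ x₂ := by
    intro p
    rw [Matrix.mul_apply, Fintype.sum_sum_type]
    have h2 : ∀ r : Fin k × Fin n,
        M (Sum.inr p) (Sum.inr r) * ((M.map σ)ᵀ) (Sum.inr r) (Sum.inl ())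
          = B p r * σ x₂ := by
      intro r; simp [hM]
    simp only [h2]
    rw [← Finset.sum_mul, hB, blockCirc_rowsum, ← hSa]
    simp [hM]
  have E22 : ∀ p q, (M * (M.map σ)ᵀ) (Sum.inr p) (Sum.inr q)
      = x₃ * σ x₃ + TF σ k n a (q.1 - p.1) (q.2 - p.2) := by
    intro p q
    rw [Matrix.mul_apply, Fintype.sum_sum_type]
    have h2 : ∀ r : Fin k × Fin n,
        M (Sum.inr p) (Sum.inr r) * ((M.map σ)ᵀ) (Sum.inr r) (Sum.inr q)
          = B p r * σ (B q r) := by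
      intro r; simp [hM]
    simp only [h2]
    have h3 : ∑ r : Fin k × Fin n, B p r * σ (B q r)
        = TF σ k n a (q.1 - p.1) (q.2 - p.2) := by
      simp only [hB, blockCirc_apply]
      refine (Fintype.sum_equiv ((Equiv.addRight q.1).prodCongr (Equiv.addRight q.2))
        (fun x : Fin k × Fin n =>
          a ((x.1 + (q.1 - p.1) : Fin k) : ℕ) ((x.2 + (q.2 - p.2) : Fin n) : ℕ)
            * σ (a (x.1 : ℕ) (x.2 : ℕ)))
        (fun r : Fin k × Fin n =>
          a ((r.1 - p.1 : Fin k) : ℕ) ((r.2 - p.2 : Fin n) : ℕ)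
            * σ (a ((r.1 - q.1 : Fin k) : ℕ) ((r.2 - q.2 : Fin n) : ℕ))) ?_).symm
      intro x
      simp [Equiv.prodCongr_apply, Prod.map, add_sub_assoc, add_sub_cancel_right]
    rw [h3]
    simp [hM]
  have main : M * (M.map σ)ᵀ = -1
      ↔ (x₁ * σ x₁ + (k * n) • (x₂ * σ x₂) = -1
        ∧ (x₁ * σ x₃ + x₂ * σ Sa = 0)
        ∧ (x₃ * σ x₁ + Sa * σ x₂ = 0)
        ∧ ∀ (j : Fin k) (t : Fin n),
            x₃ * σ x₃ + TF σ k n a j t = -(if j = 0 ∧ t = 0 then 1 else 0)) := by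
    rw [← Matrix.ext_iff]
    constructor
    · intro h
      refine ⟨?_, ?_, ?_, ?_⟩
      · have h0 := h (Sum.inl ()) (Sum.inl ())
        rw [E11] at h0
        simpa [Matrix.one_apply] using h0
      · have h0 := h (Sum.inl ()) (Sum.inr (0, 0))
        rw [E12 (0, 0)] at h0
        simpa using h0
      · have h0 := h (Sum.inr (0, 0)) (Sum.inl ())
        rw [E21 (0, 0)] at h0
        simpa using h0
      · intro j t
        have h0 := h (Sum.inr (0, 0)) (Sum.inr (j, t))
        rw [E22 (0, 0) (j, t)] at h0
        simp only [sub_zero] at h0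
        rw [h0]
        by_cases hjt : j = 0 ∧ t = 0
        · obtain ⟨hj, ht⟩ := hjt
          subst hj; subst ht
          simp [Matrix.one_apply]
        · rw [if_neg hjt]
          have hne : (Sum.inr ((0 : Fin k), (0 : Fin n)) : Unit ⊕ Fin k × Fin n)
              ≠ Sum.inr (j, t) := by
            intro hc
            rw [Sum.inr.injEq, Prod.mk.injEq] at hc
            exact hjt ⟨hc.1.symm, hc.2.symm⟩
          rw [Matrix.neg_apply, Matrix.one_apply_ne hne]
    · rintro ⟨h1, h2, h3, h4⟩ i j
      match i, j with
      | Sum.inl _, Sum.inl _ =>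
        rw [E11]
        simpa [Matrix.one_apply] using h1
      | Sum.inl _, Sum.inr q =>
        rw [E12 q]
        simpa using h2
      | Sum.inr p, Sum.inl _ =>
        rw [E21 p]
        simpa using h3
      | Sum.inr p, Sum.inr q =>
        rw [E22 p q]
        have h0 := h4 (q.1 - p.1) (q.2 - p.2)
        have hiff : (q.1 - p.1 = 0 ∧ q.2 - p.2 = 0) ↔ p = q := by
          rw [sub_eq_zero, sub_eq_zero, Prod.ext_iff]
          exact ⟨fun ⟨u, v⟩ => ⟨u.symm, v.symm⟩, fun ⟨u, v⟩ => ⟨u.symm, v.symm⟩⟩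
        by_cases hpq : p = q
        · subst hpq
          rw [if_pos (hiff.mpr rfl)] at h0
          rw [h0, Matrix.neg_apply, Matrix.one_apply_eq]
        · rw [if_neg (fun hc => hpq (hiff.mp hc))] at h0
          have hne : (Sum.inr p : Unit ⊕ Fin k × Fin n) ≠ Sum.inr q :=
            fun hc => hpq (Sum.inr_injective hc)
          rw [h0, Matrix.neg_apply, Matrix.one_apply_ne hne]
  rw [main]
  have hconv : ∀ (j : Fin k) (t : Fin n),
      ∑ i ∈ Finset.range k, Theta n (a ((i + (j : ℕ)) % k)) (fun s => σ (a i s)) (t : ℕ) 1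
        = TF σ k n a j t := sum_theta_eq σ k n a
  have hconv0 : ∀ (t : Fin n),
      ∑ i ∈ Finset.range k, Theta n (a i) (fun s => σ (a i s)) (t : ℕ) 1
        = TF σ k n a 0 t := by
    intro t
    rw [← hconv 0 t]
    refine Finset.sum_congr rfl fun i hi => ?_
    rw [Fin.val_zero, Nat.add_zero, Nat.mod_eq_of_lt (Finset.mem_range.mp hi)]
  have hvpos : ∀ {m : ℕ} [NeZero m] (t : Fin m), t ≠ 0 → 1 ≤ (t : ℕ) := by
    intro m _ t h
    rcases Nat.eq_zero_or_pos (t : ℕ) with h0 | h0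
    · exact absurd (Fin.ext (by simp [h0])) h
    · exact h0
  have hsig : σ (-(x₃ * σ x₃)) = -(x₃ * σ x₃) := by
    rw [map_neg, _root_.map_mul, hσ, mul_comm]
  have equiv2 : (∀ (j : Fin k) (t : Fin n),
        x₃ * σ x₃ + TF σ k n a j t = -(if j = 0 ∧ t = 0 then 1 else 0))
      ↔ ((∑ i ∈ Finset.range k, Theta n (a i) (fun s => σ (a i s)) 0 1 = -1 - x₃ * σ x₃
            ∧ ∀ t, 1 ≤ t → t ≤ n / 2 →
                ∑ i ∈ Finset.range k, Theta n (a i) (fun s => σ (a i s)) t 1 = -(x₃ * σ x₃))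
          ∧ (∀ j, 1 ≤ j → j ≤ k / 2 →
              ∑ i ∈ Finset.range k,
                Theta n (a ((i + j) % k)) (fun s => σ (a i s)) 0 1 = -(x₃ * σ x₃))
          ∧ ∀ j, 1 ≤ j → j ≤ k - 1 → ∀ t, 1 ≤ t → t ≤ n / 2 →
              ∑ i ∈ Finset.range k,
                Theta n (a ((i + j) % k)) (fun s => σ (a i s)) t 1 = -(x₃ * σ x₃)) := by
    constructor
    · intro h
      refine ⟨⟨?_, ?_⟩, ?_, ?_⟩
      · have h0 := h 0 0
        rw [if_pos ⟨rfl, rfl⟩] at h0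
        have hc := hconv0 0
        rw [Fin.val_zero] at hc
        rw [hc]
        linear_combination h0
      · intro t h1 h2
        have ht : t < n := by omega
        have h0 := h 0 ⟨t, ht⟩
        rw [if_neg (by simp only [Fin.ext_iff, Fin.val_zero, Fin.val_mk]; omega)] at h0
        have hc := hconv0 ⟨t, ht⟩
        rw [hc]
        linear_combination h0
      · intro j h1 h2
        have hj : j < k := by omega
        have h0 := h ⟨j, hj⟩ 0
        rw [if_neg (by simp only [Fin.ext_iff, Fin.val_zero, Fin.val_mk]; omega)] at h0
        have hc := hconv ⟨j, hj⟩ 0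
        rw [Fin.val_zero] at hc
        rw [hc]
        linear_combination h0
      · intro j h1 h2 t h3 h4
        have hj : j < k := by omega
        have ht : t < n := by omega
        have h0 := h ⟨j, hj⟩ ⟨t, ht⟩
        rw [if_neg (by simp only [Fin.ext_iff, Fin.val_zero, Fin.val_mk]; omega)] at h0
        have hc := hconv ⟨j, hj⟩ ⟨t, ht⟩
        rw [hc]
        linear_combination h0
    · rintro ⟨⟨c3a, c3b⟩, c4, c5⟩
      have easy : ∀ (j : Fin k) (t : Fin n), (t : ℕ) ≤ n / 2 →
          TF σ k n a j t = (if j = 0 ∧ t = 0 then -1 - x₃ * σ x₃ else -(x₃ * σ x₃)) := by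
        intro j t ht
        by_cases hj0 : j = 0
        · subst hj0
          by_cases ht0 : t = 0
          · subst ht0
            rw [if_pos ⟨rfl, rfl⟩]
            have hc := hconv0 0
            rw [Fin.val_zero] at hc
            rw [← hc]
            exact c3a
          · rw [if_neg (by tauto), ← hconv0 t]
            exact c3b (t : ℕ) (hvpos t ht0) ht
        · rw [if_neg (by tauto)]
          have hj1 : 1 ≤ (j : ℕ) := hvpos j hj0
          by_cases ht0 : t = 0
          · subst ht0
            by_cases hj2 : (j : ℕ) ≤ k / 2
            · have hc := hconv j 0
              rw [Fin.val_zero] at hc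
              rw [← hc]
              exact c4 (j : ℕ) hj1 hj2
            · have hjlt := j.is_lt
              have hnegj : ((-j : Fin k) : ℕ) = k - (j : ℕ) := neg_val j hj0
              have hstep : TF σ k n a (-j) 0 = -(x₃ * σ x₃) := by
                have hc := hconv (-j) 0
                rw [Fin.val_zero, hnegj] at hc
                rw [← hc]
                exact c4 (k - (j : ℕ)) (by omega) (by omega)
              have hsym := TF_symm σ hσ k n a j 0
              rw [neg_zero] at hsym
              rw [← hsym, hstep, hsig]
          · rw [← hconv j t]
            have hjlt := j.is_lt
            exact c5 (j : ℕ) hj1 (by omega) (t : ℕ) (hvpos t ht0) ht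
      intro j t
      have hTF : TF σ k n a j t
          = (if j = 0 ∧ t = 0 then -1 - x₃ * σ x₃ else -(x₃ * σ x₃)) := by
        by_cases ht : (t : ℕ) ≤ n / 2
        · exact easy j t ht
        · have htlt := t.is_lt
          have ht0 : t ≠ 0 := by
            intro hc; subst hc; simp at ht
          have hnegt : ((-t : Fin n) : ℕ) = n - (t : ℕ) := neg_val t ht0
          have ht1 : 1 ≤ (t : ℕ) := hvpos t ht0
          have hnt0 : (-t : Fin n) ≠ 0 := by
            intro hc
            have h0 : ((-t : Fin n) : ℕ) = 0 := by rw [hc, Fin.val_zero]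
            omega
          have hstep : TF σ k n a (-j) (-t) = -(x₃ * σ x₃) := by
            rw [easy (-j) (-t) (by omega)]
            rw [if_neg (by tauto)]
          have hsym := TF_symm σ hσ k n a j t
          rw [← hsym, hstep, hsig, if_neg (by tauto)]
      rw [hTF]
      split_ifs <;> ring
  rw [equiv2]
  constructor
  · rintro ⟨h1, h2, _, h4⟩
    refine ⟨by linear_combination h1, by rw [hSaσ]; exact h2, h4⟩
  · rintro ⟨h1, h2, h4⟩
    rw [hSaσ] at h2
    refine ⟨by linear_combination h1, h2, ?_, h4⟩
    have hs := congrArg σ h2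
    rw [map_add, _root_.map_mul, _root_.map_mul, hσ, hσ, map_zero] at hs
    linear_combination hs
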